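/- Let n ≥ 1 and let δ₁, δ₂, δ₃, ε be real numbers in [−1,1]. Then the maximum over all pairs of functions f, g : {0,1}ⁿ → {−1, 1} of ∑_{z ∈ {0,1}ⁿ} f̂_z ĝ_z ( δ₁^{|z|} + δ₂^{|z|} + δ₃^{|z|} − ε^{|z|} ) equals max_{0 ≤ k ≤ n} | δ₁^k + δ₂^k + δ₃^k − ε^k |, where f̂_z = 2^{−n} ∑_{s ∈ {0,1}ⁿ} (−1)^{z·s} f(s), ĝ_z = 2^{−n} ∑_{t ∈ {0,1}ⁿ} (−1)^{z·t} g(t), and |z| denotes the Hamming weight of z. In particular, the maximum is attained by choosing f and g to be (up to sign) the character s ↦ (−1)^{z·s} for a string z of the optimal Hamming weight k. -/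

import Mathlib

/-- The Hamming weight of a bit string `z : Fin n → Bool`. -/
def hammWt {n : ℕ} (z : Fin n → Bool) : ℕ :=
  (Finset.univ.filter fun i => z i = true).card

/-- The character `χ_z(s) = (-1)^{z · s}` of the group `ℤ₂ⁿ`, as a real number. -/
def chi {n : ℕ} (z s : Fin n → Bool) : ℝ :=
  (-1 : ℝ) ^ (Finset.univ.filter fun i => z i = true ∧ s i = true).card

/-- The Fourier coefficient `f̂_z = 2^{-n} ∑_s (-1)^{z·s} f(s)`. -/
noncomputable def fhat {n : ℕ} (f : (Fin n → Bool) → ℝ) (z : Fin n → Bool) : ℝ :=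
  (1 / 2 : ℝ) ^ n * ∑ s : Fin n → Bool, chi z s * f s

lemma chi_eq_prod {n : ℕ} (z s : Fin n → Bool) :
    chi z s = ∏ i, (if z i = true ∧ s i = true then (-1 : ℝ) else 1) := by
  rw [chi, Finset.prod_ite, Finset.prod_const, Finset.prod_const_one, mul_one]

lemma chi_comm {n : ℕ} (z s : Fin n → Bool) : chi z s = chi s z := by
  unfold chi
  congr 1
  apply Finset.card_bij (fun a _ => a) <;> simp [and_comm]

lemma chi_orth {n : ℕ} (s t : Fin n → Bool) :
    ∑ z : Fin n → Bool, chi z s * chi z t = if s = t then (2 : ℝ) ^ n else 0 := by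
  have : ∀ z : Fin n → Bool, chi z s * chi z t =
      ∏ i, ((if z i = true ∧ s i = true then (-1 : ℝ) else 1) *
            (if z i = true ∧ t i = true then (-1 : ℝ) else 1)) := by
    intro z
    rw [chi_eq_prod, chi_eq_prod, Finset.prod_mul_distrib]
  simp_rw [this]
  rw [← Fintype.prod_sum (fun i b => (if b = true ∧ s i = true then (-1 : ℝ) else 1) *
        (if b = true ∧ t i = true then (-1 : ℝ) else 1))]
  by_cases h : s = t
  · subst h
    rw [if_pos rfl, show ((2:ℝ)^n) = ∏ _i : Fin n, (2:ℝ) by simp]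
    apply Finset.prod_congr rfl
    intro i _
    cases hs : s i <;> simp [hs]
    norm_num
  · rw [if_neg h]
    obtain ⟨i, hi⟩ : ∃ i, s i ≠ t i := by
      by_contra hcon
      push_neg at hcon
      exact h (funext hcon)
    apply Finset.prod_eq_zero (Finset.mem_univ i)
    cases hs : s i <;> cases ht : t i <;> simp [hs, ht] at hi ⊢

lemma parseval {n : ℕ} (f : (Fin n → Bool) → ℝ) (hf : ∀ s, f s = 1 ∨ f s = -1) :
    ∑ z : Fin n → Bool, (fhat f z) ^ 2 = 1 := by
  have expand : ∀ z : Fin n → Bool, (fhat f z) ^ 2 =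
      ((1/2 : ℝ) ^ n) ^ 2 * ∑ s : Fin n → Bool, ∑ t : Fin n → Bool,
        (f s * f t) * (chi z s * chi z t) := by
    intro z
    rw [fhat, mul_pow, sq (∑ s : Fin n → Bool, chi z s * f s), Finset.sum_mul_sum]
    congr 1
    apply Finset.sum_congr rfl; intro s _
    apply Finset.sum_congr rfl; intro t _
    ring
  simp_rw [expand]
  rw [← Finset.mul_sum, Finset.sum_comm]
  have hfs : ∀ s, f s ^ 2 = 1 := fun s => by rcases hf s with h | h <;> rw [h] <;> norm_num
  have hsum : ∀ s : Fin n → Bool, ∑ z : Fin n → Bool, ∑ t : Fin n → Bool,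
      (f s * f t) * (chi z s * chi z t) = (2:ℝ) ^ n := by
    intro s
    rw [Finset.sum_comm]
    have h1 : ∀ t : Fin n → Bool, ∑ z : Fin n → Bool, (f s * f t) * (chi z s * chi z t)
        = if s = t then (f s * f t) * (2:ℝ)^n else 0 := by
      intro t
      rw [← Finset.mul_sum, chi_orth, mul_ite, mul_zero]
    simp_rw [h1]
    rw [Finset.sum_ite_eq Finset.univ s (fun t => f s * f t * 2 ^ n)]
    simp [← sq, hfs s]
  simp_rw [hsum]
  rw [Finset.sum_const, Finset.card_univ]
  simp only [nsmul_eq_mul]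
  rw [Fintype.card_fun, Fintype.card_bool, Fintype.card_fin]
  have h2 : ((1/2:ℝ)^n) * 2^n = 1 := by rw [← mul_pow]; norm_num
  push_cast
  calc ((1/2:ℝ)^n)^2 * ((2:ℝ)^n * 2^n) = ((1/2:ℝ)^n * 2^n) * ((1/2:ℝ)^n * 2^n) := by ring
    _ = 1 := by rw [h2]; ring


lemma fhat_char {n : ℕ} (σ : ℝ) (z w : Fin n → Bool) :
    fhat (fun s => σ * chi z s) w = if w = z then σ else 0 := by
  rw [fhat]
  have h : ∀ s : Fin n → Bool, chi w s * (σ * chi z s) = σ * (chi s w * chi s z) := by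
    intro s; rw [chi_comm w s, chi_comm z s]; ring
  rw [Finset.sum_congr rfl (fun s _ => h s), ← Finset.mul_sum, chi_orth w z]
  have h2 : ((1/2:ℝ)^n) * 2^n = 1 := by rw [← mul_pow]; norm_num
  split_ifs
  · rw [mul_comm σ, ← mul_assoc, h2, one_mul]
  · ring

lemma hammWt_le {n : ℕ} (z : Fin n → Bool) : hammWt z ≤ n := by
  calc hammWt z ≤ Finset.univ.card := Finset.card_filter_le _ _
    _ = n := by simp

lemma exists_wt {n k : ℕ} (hk : k ≤ n) : ∃ z : Fin n → Bool, hammWt z = k := by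
  refine ⟨fun i => decide (i.val < k), ?_⟩
  unfold hammWt
  simp only [decide_eq_true_eq]
  rw [show (Finset.univ.filter fun i : Fin n => i.val < k) =
    (Finset.range k).attachFin (fun m hm => lt_of_lt_of_le (Finset.mem_range.mp hm) hk) from ?_]
  · exact Finset.card_attachFin _ _ |>.trans (Finset.card_range k)
  · ext i; simp [Finset.mem_attachFin]

lemma chi_pm {n : ℕ} (z s : Fin n → Bool) : chi z s = 1 ∨ chi z s = -1 := by
  unfold chi
  rcases Nat.even_or_odd ((Finset.univ.filter fun i => z i = true ∧ s i = true).card) with h | h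
  · exact Or.inl h.neg_one_pow
  · exact Or.inr h.neg_one_pow

lemma abs_mul_le_half {a b : ℝ} : |a * b| ≤ (a ^ 2 + b ^ 2) / 2 := by
  rw [abs_mul]
  nlinarith [sq_nonneg (|a| - |b|), abs_nonneg a, abs_nonneg b, sq_abs a, sq_abs b]

/-- Theorem 1: the parity protocol is optimal among non-adaptive distillation
protocols.  The maximum over all `±1`-valued output functions `f, g` of the
CHSH value `∑_z f̂_z ĝ_z (δ₁^{|z|}+δ₂^{|z|}+δ₃^{|z|}-ε^{|z|})` equals
`max_{0 ≤ k ≤ n} |δ₁^k + δ₂^k + δ₃^k - ε^k|`, and the maximum is attained by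
taking `f` and `g` to be (up to sign) a character of the optimal weight. -/
theorem parity_protocol_optimal
    (n : ℕ) (hn : 1 ≤ n) (δ₁ δ₂ δ₃ ε : ℝ)
    (hδ₁ : δ₁ ∈ Set.Icc (-1 : ℝ) 1) (hδ₂ : δ₂ ∈ Set.Icc (-1 : ℝ) 1)
    (hδ₃ : δ₃ ∈ Set.Icc (-1 : ℝ) 1) (hε : ε ∈ Set.Icc (-1 : ℝ) 1) :
    IsGreatest
      {V : ℝ | ∃ f g : (Fin n → Bool) → ℝ,
        (∀ s, f s = 1 ∨ f s = -1) ∧ (∀ t, g t = 1 ∨ g t = -1) ∧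
        V = ∑ z : Fin n → Bool, fhat f z * fhat g z *
              (δ₁ ^ hammWt z + δ₂ ^ hammWt z + δ₃ ^ hammWt z - ε ^ hammWt z)}
      ((Finset.range (n + 1)).sup' Finset.nonempty_range_add_one
        (fun k => |δ₁ ^ k + δ₂ ^ k + δ₃ ^ k - ε ^ k|))
    ∧ ∃ (k : ℕ) (z : Fin n → Bool) (σ τ : ℝ),
        k ≤ n ∧ hammWt z = k ∧ (σ = 1 ∨ σ = -1) ∧ (τ = 1 ∨ τ = -1) ∧
        ∑ w : Fin n → Bool,
            fhat (fun s => σ * chi z s) w * fhat (fun t => τ * chi z t) w *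
              (δ₁ ^ hammWt w + δ₂ ^ hammWt w + δ₃ ^ hammWt w - ε ^ hammWt w)
          = (Finset.range (n + 1)).sup' Finset.nonempty_range_add_one
              (fun k => |δ₁ ^ k + δ₂ ^ k + δ₃ ^ k - ε ^ k|) := by
  set c : ℕ → ℝ := fun k => δ₁ ^ k + δ₂ ^ k + δ₃ ^ k - ε ^ k with hc
  set M : ℝ := (Finset.range (n + 1)).sup' Finset.nonempty_range_add_one
      (fun k => |δ₁ ^ k + δ₂ ^ k + δ₃ ^ k - ε ^ k|) with hM
  have hMabs : ∀ k ≤ n, |c k| ≤ M := fun k hk =>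
    Finset.le_sup' (fun k => |δ₁ ^ k + δ₂ ^ k + δ₃ ^ k - ε ^ k|)
      (Finset.mem_range.mpr (Nat.lt_succ_of_le hk))
  have hM0 : 0 ≤ M := le_trans (abs_nonneg _) (hMabs 0 (Nat.zero_le n))
  -- the optimal weight
  obtain ⟨k₀, hk₀mem, hk₀⟩ := Finset.exists_mem_eq_sup' Finset.nonempty_range_add_one
      (fun k => |δ₁ ^ k + δ₂ ^ k + δ₃ ^ k - ε ^ k|)
  have hk₀n : k₀ ≤ n := Nat.lt_succ_iff.mp (Finset.mem_range.mp hk₀mem)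
  obtain ⟨z, hz⟩ := exists_wt hk₀n
  set τ : ℝ := if 0 ≤ c k₀ then 1 else -1 with hτ
  have hτpm : τ = 1 ∨ τ = -1 := by rw [hτ]; split_ifs <;> simp
  have key : ∑ w : Fin n → Bool,
      fhat (fun s => (1:ℝ) * chi z s) w * fhat (fun t => τ * chi z t) w *
        (δ₁ ^ hammWt w + δ₂ ^ hammWt w + δ₃ ^ hammWt w - ε ^ hammWt w) = M := by
    have hterm : ∀ w : Fin n → Bool,
        fhat (fun s => (1:ℝ) * chi z s) w * fhat (fun t => τ * chi z t) w *
          (δ₁ ^ hammWt w + δ₂ ^ hammWt w + δ₃ ^ hammWt w - ε ^ hammWt w)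
        = if w = z then τ * c (hammWt w) else 0 := by
      intro w
      rw [fhat_char, fhat_char]
      split_ifs <;> simp [hc]
    rw [Finset.sum_congr rfl (fun w _ => hterm w), Finset.sum_ite_eq' Finset.univ z]
    simp only [Finset.mem_univ, if_pos, hz]
    rw [hM, hk₀, hτ]
    split_ifs with h
    · rw [one_mul, abs_of_nonneg h]
    · rw [abs_of_neg (lt_of_not_ge h)]; ring
  constructor
  · constructor
    · -- membership
      exact ⟨fun s => (1:ℝ) * chi z s, fun t => τ * chi z t,
        fun s => by rcases chi_pm z s with h | h <;> simp [h],
        fun t => by rcases chi_pm z t with h | h <;> rcases hτpm with h' | h' <;>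
          simp [h, h'], key.symm⟩
    · -- upper bound
      rintro V ⟨f, g, hf, hg, rfl⟩
      have step1 : ∀ w : Fin n → Bool,
          fhat f w * fhat g w * c (hammWt w) ≤ ((fhat f w) ^ 2 + (fhat g w) ^ 2) / 2 * M := by
        intro w
        calc fhat f w * fhat g w * c (hammWt w)
            ≤ |fhat f w * fhat g w * c (hammWt w)| := le_abs_self _
          _ = |fhat f w * fhat g w| * |c (hammWt w)| := abs_mul _ _
          _ ≤ ((fhat f w) ^ 2 + (fhat g w) ^ 2) / 2 * M := by
              apply mul_le_mul abs_mul_le_half (hMabs _ (hammWt_le w)) (abs_nonneg _)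
              positivity
      calc ∑ w : Fin n → Bool, fhat f w * fhat g w * c (hammWt w)
          ≤ ∑ w : Fin n → Bool, ((fhat f w) ^ 2 + (fhat g w) ^ 2) / 2 * M :=
            Finset.sum_le_sum (fun w _ => step1 w)
        _ = ((∑ w : Fin n → Bool, (fhat f w) ^ 2) + ∑ w : Fin n → Bool, (fhat g w) ^ 2) / 2 * M := by
            rw [← Finset.sum_mul, ← Finset.sum_div, Finset.sum_add_distrib]
        _ = M := by rw [parseval f hf, parseval g hg]; norm_num
  · exact ⟨k₀, z, 1, τ, hk₀n, hz, Or.inl rfl, hτpm, key⟩
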